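/- Let σ be a nonzero measure on the real line having a density w with ‖w‖_∞ < ∞ and with support contained in the finite interval (−w_0, w_0), 0 < w_0 < ∞, and let (P_n)_{n≥0} denote the orthonormal polynomials with respect to σ. Then for every integer N ≥ 1 and every t ∈ (−w_0, w_0): 1 / Σ_{n=0}^{N} P_n(t)² ≤ 2π · w_0 · ‖w‖_∞ / N*, where N* = N if N is odd and N* = N−1 if N is even. -/

import Mathlib

/-!
By the extremal property of the Christoffel function, `1 / ∑_{k ≤ N} P_k(t)²` is at most
`∫ Q² dσ` for every polynomial `Q` of degree `≤ N` with `Q(t) = 1`. Bounding `σ` by `W` times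
Lebesgue measure on `(-w₀, w₀)`, and Lebesgue measure on `(-1, 1)` by the Chebyshev measure
`dx / √(1 - x²)`, it remains to find such a `Q` with small Chebyshev norm. Writing
`t = w₀ cos φ`, take `Q` proportional to the reproducing kernel `∑_{k ≤ N} ε_k T_k(cos φ) T_k`
of the Chebyshev measure (`ε_0 = 1`, `ε_k = 2` otherwise): its squared norm is `π / K` where
`K = 1 + 2 ∑_{k=1}^N cos² (k φ)`, and a Dirichlet-kernel estimate gives `K ≥ N / 2`.
-/

open MeasureTheory Polynomial Finset Real Polynomial.Chebyshev

theorem integral_sq_sum_of_orthogonal {α ι : Type*} [MeasurableSpace α] [DecidableEq ι]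
    {μ : Measure α} (s : Finset ι) (f : ι → α → ℝ) (c d : ι → ℝ)
    (hint : ∀ i ∈ s, ∀ j ∈ s, Integrable (fun x => f i x * f j x) μ)
    (horth : ∀ i ∈ s, ∀ j ∈ s, ∫ x, f i x * f j x ∂μ = if i = j then d i else 0) :
    ∫ x, (∑ i ∈ s, c i * f i x) ^ 2 ∂μ = ∑ i ∈ s, c i ^ 2 * d i := by
  have hexpand : ∀ x, (∑ i ∈ s, c i * f i x) ^ 2 =
      ∑ i ∈ s, ∑ j ∈ s, c i * c j * (f i x * f j x) := fun x => by
    rw [sq, sum_mul_sum]; simp only [mul_mul_mul_comm]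
  simp_rw [hexpand]
  rw [integral_finsetSum _ fun i hi =>
    integrable_finsetSum _ fun j hj => (hint i hi j hj).const_mul _]
  refine sum_congr rfl fun i hi => ?_
  rw [integral_finsetSum _ fun j hj => (hint i hi j hj).const_mul _]
  simp_rw [integral_const_mul]
  rw [sum_congr rfl fun j hj => by rw [horth i hi j hj], sum_eq_single_of_mem i hi]
  · simp [sq]
  · intro j _ hji; simp [Ne.symm hji]

theorem exists_eq_sum_smul_of_natDegree_le {K : Type*} [Field K] {P : ℕ → K[X]}
    (hP : ∀ k, (P k).degree = k) {N : ℕ} {Q : K[X]} (hQ : Q.natDegree ≤ N) :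
    ∃ c : ℕ → K, ∑ k ∈ range (N + 1), c k • P k = Q := by
  have hspan := Sequence.span_degreeLT ⟨P, hP⟩ (m := N + 1) fun i _ =>
    (Sequence.ne_zero ⟨P, hP⟩ i |> leadingCoeff_ne_zero.2).isUnit
  rw [← coe_range] at hspan
  refine (Submodule.mem_span_image_finset_iff_exists_fun' K).1 (hspan ▸ ?_)
  rw [degreeLT_succ_eq_degreeLE]
  exact mem_degreeLE.2 (degree_le_of_natDegree_le hQ)

section Orthonormal

variable {μ : Measure ℝ} {P : ℕ → ℝ[X]}

theorem ne_zero_of_orthonormal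
    (horth : ∀ k m, ∫ x, (P k).eval x * (P m).eval x ∂μ = if k = m then 1 else 0) (k : ℕ) :
    P k ≠ 0 := by
  intro h
  simpa [h] using horth k k

theorem integrable_mul_of_orthonormal
    (horth : ∀ k m, ∫ x, (P k).eval x * (P m).eval x ∂μ = if k = m then 1 else 0) (j k : ℕ) :
    Integrable (fun x => (P j).eval x * (P k).eval x) μ := by
  have hL2 : ∀ k, MemLp (fun x => (P k).eval x) 2 μ := fun k =>
    (memLp_two_iff_integrable_sq (P k).continuous.aestronglyMeasurable).2 <|
      Integrable.of_integral_ne_zero <| by simp [sq, horth]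
  exact (hL2 j).integrable_mul (hL2 k)

theorem one_div_sum_sq_eval_le_integral_sq
    (horth : ∀ k m, ∫ x, (P k).eval x * (P m).eval x ∂μ = if k = m then 1 else 0)
    (hdeg : ∀ k, (P k).natDegree = k) {N : ℕ}
    {Q : ℝ[X]} (hQ : Q.natDegree ≤ N) {t : ℝ} (hQt : Q.eval t = 1) :
    1 / ∑ k ∈ range (N + 1), (P k).eval t ^ 2 ≤ ∫ x, Q.eval x ^ 2 ∂μ := by
  have hP : ∀ k, (P k).degree = k := fun k => by
    rw [degree_eq_natDegree (ne_zero_of_orthonormal horth k), hdeg]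
  obtain ⟨c, rfl⟩ := exists_eq_sum_smul_of_natDegree_le hP hQ
  simp only [eval_finsetSum, eval_smul, smul_eq_mul] at hQt ⊢
  rw [integral_sq_sum_of_orthogonal _ _ c (fun _ => 1)
    (fun j _ k _ => integrable_mul_of_orthonormal horth j k) (fun j _ k _ => by simp [horth])]
  simp only [mul_one]
  have hCS : 1 ≤ (∑ k ∈ range (N + 1), c k ^ 2) * ∑ k ∈ range (N + 1), (P k).eval t ^ 2 := by
    simpa [hQt] using sum_mul_sq_le_sq_mul_sq (range (N + 1)) c fun k => (P k).eval t
  have hS : 0 < ∑ k ∈ range (N + 1), (P k).eval t ^ 2 := by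
    refine (sum_nonneg fun k _ => sq_nonneg _).lt_of_ne fun h => ?_
    rw [← h, mul_zero] at hCS
    linarith
  exact (div_le_iff₀ hS).2 hCS

end Orthonormal

theorem integral_withDensity_le_mul_setIntegral {w : ℝ → ℝ} {W : ℝ} {s : Set ℝ}
    (hw_meas : Measurable w) (hw_nn : ∀ t, 0 ≤ w t) (hW : ∀ t, w t ≤ W)
    (hsupp : ∀ t, w t ≠ 0 → t ∈ s) {g : ℝ → ℝ}
    (hg : IntegrableOn g s) (hg_nn : ∀ x, 0 ≤ g x) :
    ∫ x, g x ∂volume.withDensity (fun t => ENNReal.ofReal (w t)) ≤ W * ∫ x in s, g x := by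
  rw [integral_withDensity_eq_integral_toReal_smul hw_meas.ennreal_ofReal
    (ae_of_all _ fun _ => ENNReal.ofReal_lt_top)]
  simp only [ENNReal.toReal_ofReal (hw_nn _), smul_eq_mul]
  rw [← setIntegral_eq_integral_of_forall_compl_eq_zero fun t ht => by
    simp [not_imp_comm.1 (hsupp t) ht], ← integral_const_mul]
  exact integral_mono_of_nonneg (ae_of_all _ fun x => mul_nonneg (hw_nn x) (hg_nn x))
    (hg.const_mul W) (ae_of_all _ fun x => mul_le_mul_of_nonneg_right (hW x) (hg_nn x))

theorem intervalIntegral_le_integral_measureT {g : ℝ → ℝ} (hg : ContinuousOn g (Set.Icc (-1) 1))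
    (hg_nn : ∀ x, 0 ≤ g x) : ∫ x in -1..1, g x ≤ ∫ x, g x ∂measureT := by
  rw [integral_measureT]
  refine intervalIntegral.integral_mono_on_of_le_Ioo (by norm_num)
    (hg.intervalIntegrable_of_Icc (by norm_num))
    (intervalIntegrable_sqrt_one_sub_sq_inv.continuousOn_mul ?_) fun x hx => ?_
  · rwa [Set.uIcc_of_le (by norm_num)]
  · have hpos : 0 < 1 - x ^ 2 := by nlinarith [hx.1, hx.2]
    exact le_mul_of_one_le_right (hg_nn x)
      (one_le_sqrt.2 ((one_le_inv₀ hpos).2 (by nlinarith)))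

theorem intervalIntegral_le_mul_integral_comp_mul_measureT {g : ℝ → ℝ} (hg : Continuous g)
    (hg_nn : ∀ x, 0 ≤ g x) {a : ℝ} (ha : 0 < a) :
    ∫ x in -a..a, g x ≤ a * ∫ u, g (a * u) ∂measureT := by
  have hscale := intervalIntegral.integral_comp_mul_left g ha.ne' (a := -1) (b := 1)
  rw [mul_neg_one, mul_one, smul_eq_mul, eq_inv_mul_iff_mul_eq₀ ha.ne'] at hscale
  rw [← hscale]
  exact mul_le_mul_of_nonneg_left (intervalIntegral_le_integral_measureT
    (by fun_prop) fun u => hg_nn _) ha.le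

-- `π` times the reproducing kernel at `cos φ` of the polynomials of degree `≤ N` in
-- `L²(measureT)`, since `‖T₀‖² = π` and `‖T_k‖² = π / 2` for `k ≠ 0`.
noncomputable def chebyshevKernel (N : ℕ) (φ : ℝ) : ℝ[X] :=
  ∑ k ∈ range (N + 1), C ((if k = 0 then 1 else 2) * cos (k * φ)) * T ℝ k

theorem natDegree_chebyshevKernel_le (N : ℕ) (φ : ℝ) : (chebyshevKernel N φ).natDegree ≤ N :=
  natDegree_sum_le_of_forall_le _ _ fun k hk => (natDegree_C_mul_le _ _).trans <| by
    rw [natDegree_T]; simpa [Nat.lt_succ_iff] using hk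

theorem eval_chebyshevKernel_cos (N : ℕ) (φ θ : ℝ) :
    (chebyshevKernel N φ).eval (cos θ) =
      ∑ k ∈ range (N + 1), (if k = 0 then 1 else 2) * (cos (k * φ) * cos (k * θ)) := by
  simp [chebyshevKernel, eval_finsetSum, T_real_cos, mul_assoc]

theorem integral_sq_eval_chebyshevKernel (N : ℕ) (φ : ℝ) :
    ∫ x, (chebyshevKernel N φ).eval x ^ 2 ∂measureT = π * (chebyshevKernel N φ).eval (cos φ) := by
  simp only [chebyshevKernel, eval_finsetSum, eval_mul, eval_C]
  rw [integral_sq_sum_of_orthogonal _ _ _ (fun k => if k = 0 then π else π / 2)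
    (fun j _ k _ => integrable_measureT (by fun_prop)) fun j _ k _ => ?_]
  · rw [mul_sum]
    refine sum_congr rfl fun k _ => ?_
    split_ifs <;> simp only [one_mul, T_real_cos, Int.cast_natCast] <;> ring
  · split_ifs with hjk hj
    · subst hjk hj; exact integral_eval_T_real_mul_self_measureT_zero
    · subst hjk; exact integral_T_real_mul_self_measureT_of_ne_zero hj
    · exact integral_eval_T_real_mul_eval_T_real_measureT_of_ne hjk

theorem two_mul_sin_mul_sum_cos_two_mul (N : ℕ) (φ : ℝ) :
    2 * sin φ * ∑ k ∈ range (N + 1), cos (2 * k * φ) = sin φ + sin ((2 * N + 1) * φ) := by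
  induction N with
  | zero => simp [two_mul]
  | succ N ih =>
    rw [sum_range_succ, mul_add, ih, add_assoc, add_right_inj, ← eq_sub_iff_add_eq', sin_sub_sin]
    push_cast
    ring_nf

theorem neg_mul_sin_le_sin_odd_mul_of_le_pi_div_two (N : ℕ) {ψ : ℝ} (h0 : 0 < ψ)
    (h1 : ψ ≤ π / 2) : -((N + 1) * sin ψ) ≤ sin ((2 * N + 1) * ψ) := by
  have hsin : 0 ≤ sin ψ := sin_nonneg_of_nonneg_of_le_pi h0.le (by linarith [pi_pos])
  by_cases h : (2 * N + 1) * ψ ≤ π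
  · have := sin_nonneg_of_nonneg_of_le_pi (by positivity) h
    nlinarith
  · have hjordan := mul_le_sin h0.le h1
    have : 2 < 2 / π * ψ * (2 * N + 1) := by
      rw [show 2 / π * ψ * (2 * N + 1) = 2 * ((2 * N + 1) * ψ / π) by ring]
      linarith [(one_lt_div pi_pos).2 (not_le.1 h)]
    nlinarith [neg_one_le_sin ((2 * N + 1) * ψ)]

theorem neg_mul_sin_le_sin_odd_mul (N : ℕ) {φ : ℝ} (h0 : 0 < φ) (h1 : φ < π) :
    -((N + 1) * sin φ) ≤ sin ((2 * N + 1) * φ) := by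
  rcases le_total φ (π / 2) with h | h
  · exact neg_mul_sin_le_sin_odd_mul_of_le_pi_div_two N h0 h
  · have := neg_mul_sin_le_sin_odd_mul_of_le_pi_div_two N (ψ := π - φ) (by linarith)
      (by linarith)
    have hodd := sin_nat_mul_pi_sub ((2 * N + 1) * φ) (2 * N + 1)
    rw [pow_succ, pow_mul] at hodd
    push_cast at hodd
    rw [sin_pi_sub, mul_sub, hodd] at this
    simpa using this

theorem half_le_eval_chebyshevKernel_cos (N : ℕ) {φ : ℝ} (h0 : 0 < φ) (h1 : φ < π) :
    (N : ℝ) / 2 ≤ (chebyshevKernel N φ).eval (cos φ) := by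
  have hsum : (chebyshevKernel N φ).eval (cos φ) = N + ∑ k ∈ range (N + 1), cos (2 * k * φ) := by
    rw [eval_chebyshevKernel_cos, sum_range_succ', sum_range_succ' (fun k => cos _)]
    simp only [Nat.succ_ne_zero, if_false, ← sq, cos_sq, ← mul_assoc, sum_add_distrib,
      show ∀ x : ℝ, 2 * (1 / 2 + x / 2) = 1 + x from fun x => by ring]
    simp only [sum_const, card_range, nsmul_eq_mul, Nat.cast_add, Nat.cast_one, ↓reduceIte,
      CharP.cast_eq_zero, mul_zero, zero_mul, cos_zero]
    ring
  have hsin := sin_pos_of_pos_of_lt_pi h0 h1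
  have := two_mul_sin_mul_sum_cos_two_mul N φ
  have := neg_mul_sin_le_sin_odd_mul N h0 h1
  rw [hsum]
  nlinarith

theorem exists_natDegree_le_eval_eq_one_integral_sq_le (N : ℕ) (hN : 0 < N) {a φ : ℝ}
    (ha : a ≠ 0) (hφ : φ ∈ Set.Ioo 0 π) :
    ∃ Q : ℝ[X], Q.natDegree ≤ N ∧ Q.eval (a * cos φ) = 1 ∧
      ∫ u, Q.eval (a * u) ^ 2 ∂measureT ≤ 2 * π / N := by
  set K := (chebyshevKernel N φ).eval (cos φ)
  have hK : (N : ℝ) / 2 ≤ K := half_le_eval_chebyshevKernel_cos N hφ.1 hφ.2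
  have hKpos : 0 < K := lt_of_lt_of_le (by positivity) hK
  have hnorm : ∫ u, (chebyshevKernel N φ).eval u ^ 2 ∂measureT = π * K :=
    integral_sq_eval_chebyshevKernel N φ
  set Q := C K⁻¹ * (chebyshevKernel N φ).comp (C a⁻¹ * X)
  have hQ : ∀ u, Q.eval (a * u) = K⁻¹ * (chebyshevKernel N φ).eval u := fun u => by
    simp [Q, ha]
  refine ⟨Q, (natDegree_C_mul_le _ _).trans ?_, by rw [hQ, inv_mul_cancel₀ hKpos.ne'], ?_⟩
  · rw [natDegree_comp, natDegree_C_mul_X _ (inv_ne_zero ha), mul_one]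
    exact natDegree_chebyshevKernel_le N φ
  · simp_rw [hQ, mul_pow, integral_const_mul, hnorm]
    rw [inv_pow, ← div_eq_inv_mul, div_le_div_iff₀ (by positivity) (by positivity)]
    nlinarith [mul_le_mul_of_nonneg_left (show (N : ℝ) ≤ 2 * K by linarith)
      (mul_pos pi_pos hKpos).le]

theorem exists_mem_Ioo_mul_cos_eq {a t : ℝ} (ha : 0 < a) (ht : t ∈ Set.Ioo (-a) a) :
    ∃ φ ∈ Set.Ioo 0 π, a * cos φ = t := by
  have h1 : -1 < t / a := (lt_div_iff₀ ha).2 (by linarith [ht.1])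
  have h2 : t / a < 1 := (div_lt_one ha).2 ht.2
  refine ⟨arccos (t / a), ⟨arccos_pos.2 h2, arccos_lt_pi.2 h1⟩, ?_⟩
  rw [cos_arccos h1.le h2.le]
  field_simp

theorem div_le_div_ite_odd {N : ℕ} (hN : 1 ≤ N) {a : ℝ} (ha : 0 ≤ a) :
    a / N ≤ a / (if Odd N then (N : ℝ) else (N : ℝ) - 1) := by
  split_ifs with hodd
  · exact le_rfl
  · have : (2 : ℝ) ≤ N := by
      obtain ⟨k, rfl⟩ := Nat.not_odd_iff_even.1 hodd
      exact_mod_cast (by omega : 2 ≤ k + k)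
    exact div_le_div_of_nonneg_left ha (by linarith) (by linarith)

theorem stmt7 (w : ℝ → ℝ) (w0 W : ℝ) (hw0 : 0 < w0) (hw_meas : Measurable w)
    (hw_nn : ∀ t, 0 ≤ w t) (hW : ∀ t, w t ≤ W)
    (hsupp : ∀ t, w t ≠ 0 → t ∈ Set.Ioo (-w0) w0)
    (σ : Measure ℝ)
    (hσ : σ = MeasureTheory.volume.withDensity fun t => ENNReal.ofReal (w t))
    (P : ℕ → Polynomial ℝ) (hPdeg : ∀ k, (P k).natDegree = k)
    (hPorth : ∀ k m, (∫ l, (P k).eval l * (P m).eval l ∂σ) = if k = m then 1 else 0)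
    (N : ℕ) (hN : 1 ≤ N) :
    ∀ t ∈ Set.Ioo (-w0) w0,
      1 / ∑ k ∈ Finset.range (N + 1), (P k).eval t ^ 2 ≤
        2 * Real.pi * w0 * W / (if Odd N then (N : ℝ) else (N : ℝ) - 1) := by
  intro t ht
  obtain ⟨φ, hφ, rfl⟩ := exists_mem_Ioo_mul_cos_eq hw0 ht
  obtain ⟨Q, hQdeg, hQt, hQint⟩ := exists_natDegree_le_eval_eq_one_integral_sq_le N hN hw0.ne' hφ
  have hWnn : 0 ≤ W := (hw_nn 0).trans (hW 0)
  calc 1 / ∑ k ∈ range (N + 1), (P k).eval (w0 * cos φ) ^ 2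
      ≤ ∫ x, Q.eval x ^ 2 ∂σ := one_div_sum_sq_eval_le_integral_sq hPorth hPdeg hQdeg hQt
    _ ≤ W * ∫ x in Set.Ioo (-w0) w0, Q.eval x ^ 2 :=
        hσ ▸ integral_withDensity_le_mul_setIntegral hw_meas hw_nn hW hsupp
          ((Q.continuous.pow 2).integrableOn_Icc.mono_set Set.Ioo_subset_Icc_self)
          fun x => sq_nonneg _
    _ ≤ W * (w0 * ∫ u, Q.eval (w0 * u) ^ 2 ∂measureT) := by
        rw [← integral_Ioc_eq_integral_Ioo, ← intervalIntegral.integral_of_le (by linarith)]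
        gcongr
        exact intervalIntegral_le_mul_integral_comp_mul_measureT (Q.continuous.pow 2)
          (fun x => sq_nonneg _) hw0
    _ ≤ W * (w0 * (2 * π / N)) := by gcongr
    _ = 2 * π * w0 * W / N := by ring
    _ ≤ _ := div_le_div_ite_odd hN (by positivity)
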